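/- arXiv:1701.08478 — 6 statements merged into one kernel-verified Lean document; each statement's English description precedes it below -/
import Mathlib

section
/- A generalized flag F in a countable-dimensional complex vector space V is maximal (i.e., not properly contained in another generalized flag) if and only if for every nonzero vector v in V one has dim(F''_v / F'_v) = 1, where (F'_v, F''_v) is the unique pair of consecutive members of F with v ∈ F''_v \ F'_v. -/
open Submodule

variable {V : Type*} [AddCommGroup V] [Module ℂ V]

/-- `F''` is the immediate successor of `F'` in the chain `𝓕`. -/
def ConsecPair (𝓕 : Set (Submodule ℂ V)) (F' F'' : Submodule ℂ V) : Prop :=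
  F' ∈ 𝓕 ∧ F'' ∈ 𝓕 ∧ F' < F'' ∧ ∀ G ∈ 𝓕, ¬ (F' < G ∧ G < F'')

/-- A generalized flag. -/
structure IsGenFlag (𝓕 : Set (Submodule ℂ V)) : Prop where
  chain : IsChain (· ≤ ·) 𝓕
  predsucc : ∀ F ∈ 𝓕, (∃ G, ConsecPair 𝓕 G F) ∨ (∃ G, ConsecPair 𝓕 F G)
  cover : ∀ v : V, v ≠ 0 → ∃ F' F'', ConsecPair 𝓕 F' F'' ∧ v ∈ F'' ∧ v ∉ F'



/-- In a rank-one vector space, every submodule is `⊥` or `⊤`. -/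
lemma aux_bot_or_top {W : Type*} [AddCommGroup W] [Module ℂ W]
    (h : Module.rank ℂ W = 1) (S : Submodule ℂ W) : S = ⊥ ∨ S = ⊤ := by
  rcases eq_or_ne S ⊥ with hb | hb
  · exact Or.inl hb
  · right
    obtain ⟨x, hxS, hx0⟩ := Submodule.exists_mem_ne_zero_of_ne_bot hb
    obtain ⟨v₀, hv₀⟩ := rank_le_one_iff.mp h.le
    obtain ⟨r, hr⟩ := hv₀ x
    have hr0 : r ≠ 0 := by rintro rfl; simp at hr; exact hx0 hr.symm
    have hv₀S : v₀ ∈ S := by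
      have : r⁻¹ • x ∈ S := S.smul_mem _ hxS
      rwa [← hr, smul_smul, inv_mul_cancel₀ hr0, one_smul] at this
    rw [eq_top_iff]
    intro w _
    obtain ⟨c, hc⟩ := hv₀ w
    rw [← hc]; exact S.smul_mem _ hv₀S

/-- The quotient `F''/F'` has rank one iff no submodule lies strictly between. -/
lemma aux_rank_one_iff_covby (F' F'' : Submodule ℂ V) (hlt : F' < F'') :
    Module.rank ℂ (↥F'' ⧸ Submodule.comap F''.subtype F') = 1 ↔
    ∀ H : Submodule ℂ V, ¬ (F' < H ∧ H < F'') := by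
  set N : Submodule ℂ ↥F'' := Submodule.comap F''.subtype F' with hN
  constructor
  · rintro h1 H ⟨h1', h2'⟩
    set H' : Submodule ℂ ↥F'' := Submodule.comap F''.subtype H with hH'
    have hNH : N ≤ H' := Submodule.comap_mono h1'.le
    -- image of H' in the quotient
    have := aux_bot_or_top h1 (Submodule.map N.mkQ H')
    rcases this with hb | ht
    · -- then H' ≤ N, so H ≤ F'
      obtain ⟨x, hxH, hxF'⟩ := SetLike.exists_of_lt h1'
      have hxF'' : x ∈ F'' := h2'.le hxH
      have : N.mkQ ⟨x, hxF''⟩ ∈ Submodule.map N.mkQ H' :=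
        Submodule.mem_map_of_mem (by simpa [hH'] using hxH)
      rw [hb, Submodule.mem_bot] at this
      have : (⟨x, hxF''⟩ : ↥F'') ∈ N := by
        rwa [Submodule.mkQ_apply, Submodule.Quotient.mk_eq_zero] at this
      exact hxF' (by simpa [hN] using this)
    · -- then H' ⊔ N = ⊤, so F'' ≤ H
      obtain ⟨y, hyF'', hyH⟩ := SetLike.exists_of_lt h2'
      have hy : N.mkQ ⟨y, hyF''⟩ ∈ Submodule.map N.mkQ H' := ht ▸ Submodule.mem_top
      obtain ⟨z, hzH', hz⟩ := hy
      rw [Submodule.mkQ_apply, Submodule.mkQ_apply, Submodule.Quotient.eq] at hz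
      have hzF' : (z : V) - y ∈ F' := by simpa [hN] using hz
      have : (y : V) ∈ H := by
        have hzH : (z : V) ∈ H := hzH'
        have := H.sub_mem hzH (h1'.le hzF')
        simpa using this
      exact hyH this
  · intro hno
    obtain ⟨v, hvF'', hvF'⟩ := SetLike.exists_of_lt hlt
    have hv0 : v ≠ 0 := fun h => hvF' (by rw [h]; exact F'.zero_mem)
    set G : Submodule ℂ V := F' ⊔ Submodule.span ℂ {v} with hG
    have hFG : F' < G := by
      refine lt_of_le_of_ne le_sup_left (fun h => hvF' ?_)
      rw [h]; exact Submodule.mem_sup_right (Submodule.mem_span_singleton_self v)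
    have hGF : G ≤ F'' := sup_le hlt.le ((Submodule.span_singleton_le_iff_mem v F'').mpr hvF'')
    have hGeq : G = F'' := by
      by_contra hne
      exact hno G ⟨hFG, lt_of_le_of_ne hGF hne⟩
    -- now the quotient is spanned by the class of v
    have hq : ∀ q : ↥F'' ⧸ N, ∃ r : ℂ, r • N.mkQ ⟨v, hvF''⟩ = q := by
      intro q
      obtain ⟨x, rfl⟩ := N.mkQ_surjective q
      have hx : (x : V) ∈ F' ⊔ Submodule.span ℂ {v} := by rw [← hG, hGeq]; exact x.2
      obtain ⟨y, hy, z, hz, hyz⟩ := Submodule.mem_sup.mp hx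
      obtain ⟨r, rfl⟩ := Submodule.mem_span_singleton.mp hz
      refine ⟨r, ?_⟩
      rw [← map_smul, Submodule.mkQ_apply, Submodule.mkQ_apply, Submodule.Quotient.eq]
      have : ((r • (⟨v, hvF''⟩ : ↥F'') - x : ↥F'') : V) = -y := by
        push_cast
        rw [← hyz]; abel
      show (r • (⟨v, hvF''⟩ : ↥F'') - x : ↥F'') ∈ N
      simp only [hN, Submodule.mem_comap, Submodule.subtype_apply]
      rw [this]
      exact F'.neg_mem hy
    have hle : Module.rank ℂ (↥F'' ⧸ N) ≤ 1 := rank_le_one_iff.mpr ⟨_, hq⟩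
    have hnt : Nontrivial (↥F'' ⧸ N) := by
      refine ⟨N.mkQ ⟨v, hvF''⟩, 0, fun h => ?_⟩
      rw [Submodule.mkQ_apply, Submodule.Quotient.mk_eq_zero] at h
      exact hvF' (by simpa [hN] using h)
    exact le_antisymm hle (Cardinal.one_le_iff_pos.mpr rank_pos)

/-- A generalized flag is maximal iff for every nonzero `v` the quotient `F''_v / F'_v`
of the corresponding pair of consecutive members is one-dimensional. -/
theorem maximal_iff_rank_one
    (hV : Module.rank ℂ V = Cardinal.aleph0)
    (𝓕 : Set (Submodule ℂ V)) (h𝓕 : IsGenFlag 𝓕) :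
    (¬ ∃ 𝓖 : Set (Submodule ℂ V), IsGenFlag 𝓖 ∧ 𝓕 ⊂ 𝓖) ↔
    ∀ v : V, v ≠ 0 → ∀ F' F'' : Submodule ℂ V,
      ConsecPair 𝓕 F' F'' → v ∈ F'' → v ∉ F' →
      Module.rank ℂ (↥F'' ⧸ Submodule.comap F''.subtype F') = 1 := by
  constructor
  · -- maximality implies rank one
    intro hmax v hv F' F'' hcons hvF'' hvF'
    rw [aux_rank_one_iff_covby F' F'' hcons.2.2.1]
    rintro H ⟨h1, h2⟩
    apply hmax
    refine ⟨insert H 𝓕, ?_, Set.ssubset_insert (fun hH => hcons.2.2.2 H hH ⟨h1, h2⟩)⟩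
    have hHcomp : ∀ F ∈ 𝓕, H ≤ F ∨ F ≤ H := by
      intro F hF
      rcases eq_or_ne F F' with rfl | hne1
      · exact Or.inr h1.le
      rcases eq_or_ne F F'' with rfl | hne2
      · exact Or.inl h2.le
      rcases h𝓕.chain.total hF hcons.1 with hc1 | hc1
      · exact Or.inr (hc1.trans h1.le)
      rcases h𝓕.chain.total hF hcons.2.1 with hc2 | hc2
      · exact absurd ⟨lt_of_le_of_ne hc1 (Ne.symm hne1), lt_of_le_of_ne hc2 hne2⟩
          (hcons.2.2.2 F hF)
      · exact Or.inl (h2.le.trans hc2)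
    refine ⟨?_, ?_, ?_⟩
    · -- chain
      intro A hA B hB hAB
      rcases Set.mem_insert_iff.mp hA with hA' | hA'
      · rcases Set.mem_insert_iff.mp hB with hB' | hB'
        · exact absurd (hA'.trans hB'.symm) hAB
        · subst hA'; exact hHcomp B hB'
      · rcases Set.mem_insert_iff.mp hB with hB' | hB'
        · subst hB'; exact (hHcomp A hA').symm
        · exact h𝓕.chain hA' hB' hAB
    · -- predsucc
      intro F hF
      rcases Set.mem_insert_iff.mp hF with rfl | hF
      · -- F = H : pair (F', H)
        left
        refine ⟨F', Set.mem_insert_of_mem _ hcons.1, Set.mem_insert _ _, h1, ?_⟩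
        rintro K hK ⟨hk1, hk2⟩
        rcases Set.mem_insert_iff.mp hK with rfl | hK
        · exact lt_irrefl _ hk2
        · exact hcons.2.2.2 K hK ⟨hk1, hk2.trans h2⟩
      · rcases h𝓕.predsucc F hF with ⟨A, hA⟩ | ⟨B, hB⟩
        · by_cases hc : A < H ∧ H < F
          · left
            refine ⟨H, Set.mem_insert _ _, Set.mem_insert_of_mem _ hF, hc.2, ?_⟩
            rintro K hK ⟨hk1, hk2⟩
            rcases Set.mem_insert_iff.mp hK with rfl | hK
            · exact lt_irrefl _ hk1
            · exact hA.2.2.2 K hK ⟨hc.1.trans hk1, hk2⟩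
          · left
            refine ⟨A, Set.mem_insert_of_mem _ hA.1, Set.mem_insert_of_mem _ hF,
              hA.2.2.1, ?_⟩
            rintro K hK ⟨hk1, hk2⟩
            rcases Set.mem_insert_iff.mp hK with rfl | hK
            · exact hc ⟨hk1, hk2⟩
            · exact hA.2.2.2 K hK ⟨hk1, hk2⟩
        · by_cases hc : F < H ∧ H < B
          · right
            refine ⟨H, Set.mem_insert_of_mem _ hF, Set.mem_insert _ _, hc.1, ?_⟩
            rintro K hK ⟨hk1, hk2⟩
            rcases Set.mem_insert_iff.mp hK with rfl | hK
            · exact lt_irrefl _ hk2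
            · exact hB.2.2.2 K hK ⟨hk1, hk2.trans hc.2⟩
          · right
            refine ⟨B, Set.mem_insert_of_mem _ hF, Set.mem_insert_of_mem _ hB.2.1,
              hB.2.2.1, ?_⟩
            rintro K hK ⟨hk1, hk2⟩
            rcases Set.mem_insert_iff.mp hK with rfl | hK
            · exact hc ⟨hk1, hk2⟩
            · exact hB.2.2.2 K hK ⟨hk1, hk2⟩
    · -- cover
      intro w hw
      obtain ⟨A, B, hAB, hwB, hwA⟩ := h𝓕.cover w hw
      by_cases hc : A < H ∧ H < B
      · by_cases hwH : w ∈ H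
        · refine ⟨A, H, ⟨Set.mem_insert_of_mem _ hAB.1, Set.mem_insert _ _, hc.1, ?_⟩,
            hwH, hwA⟩
          rintro K hK ⟨hk1, hk2⟩
          rcases Set.mem_insert_iff.mp hK with rfl | hK
          · exact lt_irrefl _ hk2
          · exact hAB.2.2.2 K hK ⟨hk1, hk2.trans hc.2⟩
        · refine ⟨H, B, ⟨Set.mem_insert _ _, Set.mem_insert_of_mem _ hAB.2.1, hc.2, ?_⟩,
            hwB, hwH⟩
          rintro K hK ⟨hk1, hk2⟩
          rcases Set.mem_insert_iff.mp hK with rfl | hK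
          · exact lt_irrefl _ hk1
          · exact hAB.2.2.2 K hK ⟨hc.1.trans hk1, hk2⟩
      · refine ⟨A, B, ⟨Set.mem_insert_of_mem _ hAB.1, Set.mem_insert_of_mem _ hAB.2.1,
          hAB.2.2.1, ?_⟩, hwB, hwA⟩
        rintro K hK ⟨hk1, hk2⟩
        rcases Set.mem_insert_iff.mp hK with rfl | hK
        · exact hc ⟨hk1, hk2⟩
        · exact hAB.2.2.2 K hK ⟨hk1, hk2⟩
  · -- rank one implies maximality
    intro hrk
    rintro ⟨𝓖, h𝓖, hsub⟩
    obtain ⟨G, hG𝓖, hG𝓕⟩ := Set.exists_of_ssubset hsub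
    have hno : ∀ F' F'' : Submodule ℂ V, ConsecPair 𝓕 F' F'' →
        ∀ H : Submodule ℂ V, ¬ (F' < H ∧ H < F'') := by
      intro F' F'' hcons H
      obtain ⟨v, hv'', hv'⟩ := SetLike.exists_of_lt hcons.2.2.1
      have hv0 : v ≠ 0 := fun h => hv' (by rw [h]; exact F'.zero_mem)
      exact (aux_rank_one_iff_covby F' F'' hcons.2.2.1).mp
        (hrk v hv0 F' F'' hcons hv'' hv') H
    rcases h𝓖.predsucc G hG𝓖 with ⟨X, hX⟩ | ⟨Y, hY⟩
    · -- G has an immediate predecessor X in 𝓖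
      obtain ⟨v, hvG, hvX⟩ := SetLike.exists_of_lt hX.2.2.1
      have hv0 : v ≠ 0 := fun h => hvX (by rw [h]; exact X.zero_mem)
      obtain ⟨F', F'', hcons, hvF'', hvF'⟩ := h𝓕.cover v hv0
      have hF'𝓖 : F' ∈ 𝓖 := hsub.subset hcons.1
      have hF''𝓖 : F'' ∈ 𝓖 := hsub.subset hcons.2.1
      have hF'G : F' < G := by
        rcases h𝓖.chain.total hF'𝓖 hG𝓖 with h | h
        · exact lt_of_le_of_ne h (fun e => hvF' (by rw [e]; exact hvG))
        · exact absurd (h hvG) hvF'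
      have hF''G : F'' < G := by
        rcases h𝓖.chain.total hF''𝓖 hG𝓖 with h | h
        · exact lt_of_le_of_ne h (fun e => hG𝓕 (by rw [← e]; exact hcons.2.1))
        · have hGF'' : G < F'' := lt_of_le_of_ne h (fun e => hG𝓕 (by rw [e]; exact hcons.2.1))
          exact absurd ⟨hF'G, hGF''⟩ (hno F' F'' hcons G)
      have hXF'' : X < F'' := by
        rcases h𝓖.chain.total hX.1 hF''𝓖 with h | h
        · exact lt_of_le_of_ne h (fun e => hvX (by rw [e]; exact hvF''))
        · exact absurd (h hvF'') hvX
      exact hX.2.2.2 F'' hF''𝓖 ⟨hXF'', hF''G⟩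
    · -- G has an immediate successor Y in 𝓖
      obtain ⟨v, hvY, hvG⟩ := SetLike.exists_of_lt hY.2.2.1
      have hv0 : v ≠ 0 := fun h => hvG (by rw [h]; exact G.zero_mem)
      obtain ⟨F', F'', hcons, hvF'', hvF'⟩ := h𝓕.cover v hv0
      have hF'𝓖 : F' ∈ 𝓖 := hsub.subset hcons.1
      have hF''𝓖 : F'' ∈ 𝓖 := hsub.subset hcons.2.1
      have hGF'' : G < F'' := by
        rcases h𝓖.chain.total hG𝓖 hF''𝓖 with h | h
        · exact lt_of_le_of_ne h (fun e => hG𝓕 (by rw [e]; exact hcons.2.1))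
        · exact absurd (h hvF'') hvG
      have hGF' : G < F' := by
        rcases h𝓖.chain.total hG𝓖 hF'𝓖 with h | h
        · exact lt_of_le_of_ne h (fun e => hG𝓕 (by rw [e]; exact hcons.1))
        · have hF'G : F' < G := lt_of_le_of_ne h (fun e => hG𝓕 (by rw [← e]; exact hcons.1))
          exact absurd ⟨hF'G, hGF''⟩ (hno F' F'' hcons G)
      have hF'Y : F' < Y := by
        rcases h𝓖.chain.total hF'𝓖 hY.2.1 with h | h
        · exact lt_of_le_of_ne h (fun e => hvF' (by rw [e]; exact hvY))
        · exact absurd (h hvY) hvF'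
      exact hY.2.2.2 F' hF'𝓖 ⟨hGF', hF'Y⟩
end

section
/- Every generalized flag F in a countable-dimensional complex vector space V admits a compatible basis: there exist a basis E of V and a surjective map σ from E onto the linearly ordered set A indexing the pairs of consecutive members of F, such that for each α ∈ A, F'_α is the span of {e ∈ E : σ(e) ≺ α} and F''_α is the span of {e ∈ E : σ(e) ⪯ α}. -/
open Submodule

variable {V : Type*} [AddCommGroup V] [Module ℂ V]

/-!
Give a nonzero vector `v` the degree `α` for which `v ∈ F''_α \ F'_α` (and `0` the degree `⊥`),
so that `v ∈ F''_α ↔ deg v ≤ α` and `v ∈ F'_α ↔ deg v < α`. Call a set of vectors compatible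
if, for every `α`, its vectors of degree `α` are linearly independent modulo `F'_α`. Then the
degree of a linear combination of a compatible set is the largest degree occurring in it; hence
a compatible set is linearly independent, and `F'_α`, `F''_α` meet its span in the spans of its
vectors of degree `< α`, resp. `≤ α`.

A finite compatible set `S` can be enlarged to a compatible set whose span contains a given
vector `w`: if `w ∉ F'_α + span S_α` (with `α = deg w`), adjoin `w`; otherwise write
`w = u + z` with `u ∈ F'_α`, `z ∈ span S_α`, and continue with `u`, whose degree is smaller.
Only finitely many degrees occur in `S`, so this stops. Doing this along a spanning sequence,
which exists because `V` has countable dimension, produces a compatible spanning set, i.e. a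
compatible basis.
-/

theorem Finsupp.linearCombination_id_mem_span {R M : Type*} [Semiring R] [AddCommMonoid M]
    [Module R M] {s : Set M} {l : M →₀ R} (hl : l ∈ Finsupp.supported R R s) :
    Finsupp.linearCombination R id l ∈ span R s := by
  simpa using (Finsupp.mem_span_image_iff_linearCombination R (v := id)).2 ⟨l, hl, rfl⟩

theorem exists_seq_span_range_eq_top_of_rank_le_aleph0 {K W : Type*} [Field K] [AddCommGroup W]
    [Module K W] (hW : Module.rank K W ≤ Cardinal.aleph0) :
    ∃ v : ℕ → W, span K (Set.range v) = ⊤ := by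
  let b := Module.Basis.ofVectorSpace K W
  have : Countable (Module.Basis.ofVectorSpaceIndex K W) :=
    Cardinal.mk_le_aleph0_iff.1 (b.mk_eq_rank''.trans_le hW)
  obtain ⟨v, hv⟩ := ((Set.countable_range b).insert 0).exists_eq_range (Set.insert_nonempty _ _)
  exact ⟨v, by rw [← hv, span_insert_zero, b.span_eq]⟩

/-- A generalized flag given by its consecutive pairs `lower α = F'_α < upper α = F''_α`. -/
structure GenFlagFamily (K W A : Type*) [Field K] [AddCommGroup W] [Module K W]
    [LinearOrder A] where
  lower : A → Submodule K W
  upper : A → Submodule K W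
  lower_lt_upper : ∀ α, lower α < upper α
  upper_le_lower : ∀ ⦃α β⦄, α < β → upper α ≤ lower β
  exists_mem_upper_notMem_lower : ∀ v, v ≠ 0 → ∃ α, v ∈ upper α ∧ v ∉ lower α

namespace GenFlagFamily

variable {K W A : Type*} [Field K] [AddCommGroup W] [Module K W] [LinearOrder A]
  (G : GenFlagFamily K W A)

theorem lower_le_upper (α : A) : G.lower α ≤ G.upper α := (G.lower_lt_upper α).le

open Classical in
noncomputable def deg (v : W) : WithBot A :=
  if h : ∃ α, v ∈ G.upper α ∧ v ∉ G.lower α then h.choose else ⊥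

theorem deg_eq {v : W} {α : A} (hu : v ∈ G.upper α) (hl : v ∉ G.lower α) : G.deg v = α := by
  have h : ∃ α, v ∈ G.upper α ∧ v ∉ G.lower α := ⟨α, hu, hl⟩
  rw [deg, dif_pos h]
  obtain ⟨hu', hl'⟩ := h.choose_spec
  congr 1
  rcases lt_trichotomy h.choose α with hlt | heq | hgt
  · exact absurd (G.upper_le_lower hlt hu') hl
  · exact heq
  · exact absurd (G.upper_le_lower hgt hu) hl'

@[simp]
theorem deg_zero : G.deg 0 = ⊥ := by
  rw [deg, dif_neg]
  rintro ⟨α, -, h⟩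
  exact h (zero_mem _)

theorem exists_deg_eq {v : W} (hv : v ≠ 0) : ∃ α : A, G.deg v = α := by
  obtain ⟨α, hu, hl⟩ := G.exists_mem_upper_notMem_lower v hv
  exact ⟨α, G.deg_eq hu hl⟩

theorem deg_eq_bot_iff {v : W} : G.deg v = ⊥ ↔ v = 0 := by
  refine ⟨fun h => ?_, fun h => h ▸ G.deg_zero⟩
  by_contra hv
  obtain ⟨α, hα⟩ := G.exists_deg_eq hv
  exact WithBot.coe_ne_bot (hα.symm.trans h)

theorem mem_upper_iff {v : W} {α : A} : v ∈ G.upper α ↔ G.deg v ≤ α := by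
  rcases eq_or_ne v 0 with rfl | hv
  · simp
  obtain ⟨β, hu, hl⟩ := G.exists_mem_upper_notMem_lower v hv
  rw [G.deg_eq hu hl, WithBot.coe_le_coe]
  refine ⟨fun h => not_lt.1 fun hαβ => hl (G.upper_le_lower hαβ h), fun h => ?_⟩
  rcases h.eq_or_lt with rfl | hβα
  · exact hu
  · exact G.lower_le_upper α (G.upper_le_lower hβα hu)

theorem mem_lower_iff {v : W} {α : A} : v ∈ G.lower α ↔ G.deg v < α := by
  rcases eq_or_ne v 0 with rfl | hv
  · simp
  obtain ⟨β, hu, hl⟩ := G.exists_mem_upper_notMem_lower v hv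
  rw [G.deg_eq hu hl, WithBot.coe_lt_coe]
  refine ⟨fun h => not_le.1 fun hαβ => ?_, fun h => G.upper_le_lower h hu⟩
  rcases hαβ.eq_or_lt with rfl | hαβ
  · exact hl h
  · exact hl (G.upper_le_lower hαβ (G.lower_le_upper α h))

structure IsCompatible (S : Set W) : Prop where
  zero_notMem : (0 : W) ∉ S
  linearIndepOn_level : ∀ α : A, LinearIndepOn K (G.lower α).mkQ {x ∈ S | G.deg x = α}

variable {G}

theorem IsCompatible.deg_linearCombination {S : Set W} (hS : G.IsCompatible S) {l : W →₀ K}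
    (hl : l ∈ Finsupp.supported K K S) :
    G.deg (Finsupp.linearCombination K id l) = l.support.sup G.deg := by
  classical
  rcases l.support.eq_empty_or_nonempty with h | h
  · simp [Finsupp.support_eq_empty.1 h]
  obtain ⟨x₀, hx₀, hsup⟩ := Finset.exists_mem_eq_sup _ h G.deg
  obtain ⟨α, hα⟩ := G.exists_deg_eq (ne_of_mem_of_not_mem (hl hx₀) hS.zero_notMem)
  rw [hsup, hα]
  have hle : ∀ x ∈ l.support, G.deg x ≤ α := fun x hx => hα ▸ hsup ▸ Finset.le_sup hx
  have hmem : ∀ (P : Submodule K W) (l' : W →₀ K), (∀ x ∈ l'.support, x ∈ P) →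
      Finsupp.linearCombination K id l' ∈ P := fun P l' h =>
    span_le.2 h (Finsupp.linearCombination_id_mem_span (Finsupp.mem_supported_support K l'))
  set top := l.filter (fun x => G.deg x = α)
  set rest := l.filter (fun x => ¬ G.deg x = α)
  have hrest : Finsupp.linearCombination K id rest ∈ G.lower α := by
    refine hmem _ _ fun x hx => G.mem_lower_iff.2 ?_
    rw [Finsupp.support_filter, Finset.mem_filter] at hx
    exact lt_of_le_of_ne (hle x hx.1) hx.2
  have htop : Finsupp.linearCombination K id top ∉ G.lower α := by
    rw [← Submodule.Quotient.mk_eq_zero, ← Submodule.mkQ_apply, Finsupp.apply_linearCombination]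
    intro h0
    have htop_supp : top ∈ Finsupp.supported K K {x ∈ S | G.deg x = α} := fun x hx => by
      rw [Finsupp.support_filter, Finset.mem_coe, Finset.mem_filter] at hx
      exact ⟨hl hx.1, hx.2⟩
    have := linearIndepOn_iff.1 (hS.linearIndepOn_level α) top htop_supp h0
    have hx₀top : x₀ ∈ top.support := by
      rw [Finsupp.support_filter, Finset.mem_filter]
      exact ⟨hx₀, hα⟩
    simp [this] at hx₀top
  refine le_antisymm (G.mem_upper_iff.1 (hmem _ _ fun x hx => G.mem_upper_iff.2 (hle x hx)))
    (not_lt.1 fun hlt => htop ?_)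
  have hsplit := congrArg (Finsupp.linearCombination K id) (Finsupp.filter_add_filter_not l
    (fun x => G.deg x = α))
  rw [map_add] at hsplit
  rw [← add_sub_cancel_right (Finsupp.linearCombination K id top)
    (Finsupp.linearCombination K id rest), hsplit]
  exact sub_mem (G.mem_lower_iff.2 hlt) hrest

theorem IsCompatible.linearIndepOn {S : Set W} (hS : G.IsCompatible S) : LinearIndepOn K id S := by
  refine linearIndepOn_iff.2 fun l hl h0 => ?_
  have hdeg := hS.deg_linearCombination hl
  rw [h0, deg_zero, eq_comm, Finset.sup_eq_bot_iff] at hdeg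
  ext x
  by_contra hx
  exact hS.zero_notMem (G.deg_eq_bot_iff.1 (hdeg x (Finsupp.mem_support_iff.2 hx)) ▸ hl
    (Finsupp.mem_support_iff.2 hx))

theorem IsCompatible.mem_span_setOf_deg_le {S : Set W} (hS : G.IsCompatible S) {v : W}
    (hv : v ∈ span K S) : v ∈ span K {x ∈ S | G.deg x ≤ G.deg v} := by
  obtain ⟨l, hl, rfl⟩ := (Finsupp.mem_span_image_iff_linearCombination K (v := id)).1
    (by rwa [Set.image_id])
  refine Finsupp.linearCombination_id_mem_span fun x hx => ⟨hl hx, ?_⟩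
  rw [hS.deg_linearCombination hl]
  exact Finset.le_sup hx

theorem IsCompatible.upper_eq_span {S : Set W} (hS : G.IsCompatible S) (hspan : span K S = ⊤)
    (α : A) : G.upper α = span K {x ∈ S | G.deg x ≤ α} := by
  refine le_antisymm (fun v hv => ?_) (span_le.2 fun x hx => G.mem_upper_iff.2 hx.2)
  refine span_mono ?_ (hS.mem_span_setOf_deg_le (hspan ▸ mem_top))
  exact fun x hx => ⟨hx.1, hx.2.trans (G.mem_upper_iff.1 hv)⟩

theorem IsCompatible.lower_eq_span {S : Set W} (hS : G.IsCompatible S) (hspan : span K S = ⊤)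
    (α : A) : G.lower α = span K {x ∈ S | G.deg x < α} := by
  refine le_antisymm (fun v hv => ?_) (span_le.2 fun x hx => G.mem_lower_iff.2 hx.2)
  refine span_mono ?_ (hS.mem_span_setOf_deg_le (hspan ▸ mem_top))
  exact fun x hx => ⟨hx.1, hx.2.trans_lt (G.mem_lower_iff.1 hv)⟩

theorem IsCompatible.insert_of_notMem_lower_sup {S : Set W} (hS : G.IsCompatible S) {u : W} {α : A}
    (hu : G.deg u = α) (hnew : u ∉ G.lower α ⊔ span K {x ∈ S | G.deg x = α}) :
    G.IsCompatible (insert u S) := by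
  refine ⟨?_, fun β => ?_⟩
  · rintro (h | h)
    · exact WithBot.coe_ne_bot (hu.symm.trans (h ▸ G.deg_zero))
    · exact hS.zero_notMem h
  by_cases hβ : β = α
  · subst hβ
    have huS : u ∉ {x ∈ S | G.deg x = β} := fun h => hnew (mem_sup_right (subset_span h))
    refine ((linearIndepOn_insert huS).2 ⟨hS.linearIndepOn_level β, ?_⟩).mono ?_
    · rwa [← map_span, ← mem_comap, comap_map_mkQ]
    · rintro x ⟨rfl | hx, hdeg⟩
      exacts [Set.mem_insert _ _, Set.mem_insert_of_mem _ ⟨hx, hdeg⟩]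
  · refine (hS.linearIndepOn_level β).mono ?_
    rintro x ⟨rfl | hx, hdeg⟩
    exacts [absurd (WithBot.coe_injective (hu.symm.trans hdeg)) (Ne.symm hβ), ⟨hx, hdeg⟩]

theorem IsCompatible.exists_sub_mem_span_isCompatible_insert {S : Finset W}
    (hS : G.IsCompatible (S : Set W)) {w : W} (hw : w ∉ span K (S : Set W)) :
    ∃ u, w - u ∈ span K (S : Set W) ∧ G.IsCompatible (insert u (S : Set W)) := by
  classical
  induction hn : (S.filter fun x => G.deg x ≤ G.deg w).card using Nat.strong_induction_on
    generalizing w with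
  | _ n ih =>
  obtain ⟨α, hα⟩ := G.exists_deg_eq (v := w) <| by rintro rfl; exact hw (zero_mem _)
  by_cases hnew : w ∈ G.lower α ⊔ span K {x ∈ (S : Set W) | G.deg x = α}
  swap
  · exact ⟨w, by simp, hS.insert_of_notMem_lower_sup hα hnew⟩
  obtain ⟨u, hu, z, hz, rfl⟩ := mem_sup.1 hnew
  have hzS : z ∈ span K (S : Set W) := span_mono (fun x hx => hx.1) hz
  have huS : u ∉ span K (S : Set W) := fun h => hw (add_mem h hzS)
  have hdeg : G.deg u < α := G.mem_lower_iff.1 hu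
  obtain ⟨e, heS, he⟩ : ∃ e ∈ S, G.deg e = α := by
    by_contra! hnone
    have hz0 : z = 0 := by
      rwa [show {x ∈ (S : Set W) | G.deg x = α} = ∅ from
        Set.eq_empty_of_forall_notMem fun x hx => hnone x hx.1 hx.2, span_empty, mem_bot] at hz
    rw [hz0, add_zero] at hα
    exact hdeg.ne hα
  have hlt : (S.filter fun x => G.deg x ≤ G.deg u).card < n := by
    refine hn ▸ Finset.card_lt_card ((Finset.ssubset_iff_of_subset ?_).2 ⟨e, ?_, ?_⟩)
    · intro x hx
      rw [Finset.mem_filter] at hx ⊢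
      exact ⟨hx.1, hx.2.trans (hdeg.le.trans hα.ge)⟩
    · exact Finset.mem_filter.2 ⟨heS, he.le.trans hα.ge⟩
    · exact fun h => ((Finset.mem_filter.1 h).2.trans_lt hdeg).ne he
  obtain ⟨u', hu', hS'⟩ := ih _ hlt huS rfl
  exact ⟨u', by simpa [add_sub_right_comm] using add_mem hu' hzS, hS'⟩

theorem IsCompatible.exists_superset_mem_span {S : Finset W} (hS : G.IsCompatible (S : Set W))
    (w : W) : ∃ S' : Finset W, S ⊆ S' ∧ G.IsCompatible (S' : Set W) ∧ w ∈ span K (S' : Set W) := by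
  classical
  by_cases hw : w ∈ span K (S : Set W)
  · exact ⟨S, subset_rfl, hS, hw⟩
  obtain ⟨u, hu, hS'⟩ := hS.exists_sub_mem_span_isCompatible_insert hw
  refine ⟨insert u S, Finset.subset_insert _ _, by rwa [Finset.coe_insert], ?_⟩
  rw [Finset.coe_insert, ← sub_add_cancel w u]
  exact add_mem (span_mono (Set.subset_insert _ _) hu) (subset_span (Set.mem_insert _ _))

theorem isCompatible_empty : G.IsCompatible ∅ :=
  ⟨Set.notMem_empty 0, fun α => by simp⟩

theorem isCompatible_iUnion {ι : Type*} {S : ι → Set W} (hdir : Directed (· ⊆ ·) S)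
    (hS : ∀ i, G.IsCompatible (S i)) : G.IsCompatible (⋃ i, S i) := by
  refine ⟨fun h => ?_, fun α => ?_⟩
  · obtain ⟨i, hi⟩ := Set.mem_iUnion.1 h
    exact (hS i).zero_notMem hi
  have hlevel : {x ∈ ⋃ i, S i | G.deg x = α} = ⋃ i, {x ∈ S i | G.deg x = α} := by
    ext x
    simp
  rw [hlevel]
  exact linearIndepOn_iUnion_of_directed
    (hdir.mono_comp (g := fun s => {x ∈ s | G.deg x = α}) _ fun s t h x hx => ⟨h hx.1, hx.2⟩)
    fun i => (hS i).linearIndepOn_level α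

variable (G)

theorem exists_isCompatible_span_eq_top (hW : Module.rank K W ≤ Cardinal.aleph0) :
    ∃ E : Set W, E.Countable ∧ G.IsCompatible E ∧ span K E = ⊤ := by
  obtain ⟨v, hv⟩ := exists_seq_span_range_eq_top_of_rank_le_aleph0 hW
  have hext : ∀ S : Finset W, G.IsCompatible (S : Set W) → ∀ w, ∃ S' : Finset W,
      S ⊆ S' ∧ G.IsCompatible (S' : Set W) ∧ w ∈ span K (S' : Set W) :=
    fun S hS => hS.exists_superset_mem_span
  choose! next hsub hnext hmem using hext
  let S : ℕ → Finset W := fun n =>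
    Nat.rec (motive := fun _ => Finset W) ∅ (fun k T => next T (v k)) n
  have hS : ∀ n, G.IsCompatible (S n : Set W) := by
    intro n
    induction n with
    | zero => simpa [S] using isCompatible_empty
    | succ n ih => exact hnext _ ih _
  have hmono : Monotone fun n => (S n : Set W) :=
    monotone_nat_of_le_succ fun n => Finset.coe_subset.2 (hsub _ (hS n) _)
  refine ⟨⋃ n, (S n : Set W), Set.countable_iUnion fun n => (S n).countable_toSet,
    isCompatible_iUnion (S := fun n => (S n : Set W)) hmono.directed_le hS, ?_⟩
  rw [eq_top_iff, ← hv, span_le]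
  rintro _ ⟨n, rfl⟩
  exact span_mono (Set.subset_iUnion (fun n => (S n : Set W)) (n + 1)) (hmem _ (hS n) _)

theorem exists_compatible_basis (hW : Module.rank K W ≤ Cardinal.aleph0) :
    ∃ (ι : Type) (E : Module.Basis ι K W) (σ : ι → A), Function.Surjective σ ∧
      ∀ α, G.lower α = span K (E '' {i | σ i < α}) ∧ G.upper α = span K (E '' {i | σ i ≤ α}) := by
  obtain ⟨S, hcount, hS, hspan⟩ := G.exists_isCompatible_span_eq_top hW
  have : Countable S := hcount.to_subtype
  obtain ⟨ι, E, hE⟩ : ∃ (ι : Type) (E : Module.Basis ι K W), Set.range E = S :=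
    ⟨Shrink S, (Module.Basis.mk hS.linearIndepOn.linearIndependent (by simp [hspan])).reindex
      (equivShrink.{0} S), by simp⟩
  let σ : ι → A := fun i => (G.deg (E i)).unbot (G.deg_eq_bot_iff.not.2 (E.ne_zero i))
  have himage : ∀ p : WithBot A → Prop, E '' {i | p (G.deg (E i))} = {x ∈ S | p (G.deg x)} := by
    intro p
    rw [show {i | p (G.deg (E i))} = E ⁻¹' {x | p (G.deg x)} from rfl,
      Set.image_preimage_eq_inter_range, hE]
    ext x
    simp [and_comm]
  have hlower : ∀ α, G.lower α = span K (E '' {i | σ i < α}) := fun α => by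
    simp_rw [σ, WithBot.unbot_lt_iff, himage (· < α)]
    exact hS.lower_eq_span hspan α
  have hupper : ∀ α, G.upper α = span K (E '' {i | σ i ≤ α}) := fun α => by
    simp_rw [σ, WithBot.unbot_le_iff, himage (· ≤ α)]
    exact hS.upper_eq_span hspan α
  refine ⟨ι, E, σ, fun α => ?_, fun α => ⟨hlower α, hupper α⟩⟩
  by_contra! hα
  refine (G.lower_lt_upper α).ne ?_
  rw [hlower, hupper, show {i | σ i < α} = {i | σ i ≤ α} from
    Set.ext fun i => lt_iff_le_and_ne.trans (and_iff_left (hα i))]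

end GenFlagFamily

def ConsecPairs (𝓕 : Set (Submodule ℂ V)) : Type _ :=
  {p : Submodule ℂ V × Submodule ℂ V // ConsecPair 𝓕 p.1 p.2}

namespace ConsecPair

variable {𝓕 : Set (Submodule ℂ V)} {a b c d : Submodule ℂ V}

theorem fst_eq_of_snd_eq (h𝓕 : IsChain (· ≤ ·) 𝓕) (hab : ConsecPair 𝓕 a b)
    (hcb : ConsecPair 𝓕 c b) : a = c := by
  rcases h𝓕.total hab.1 hcb.1 with hac | hca
  · exact hac.eq_or_lt.resolve_right fun hac => hab.2.2.2 c hcb.1 ⟨hac, hcb.2.2.1⟩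
  · exact (hca.eq_or_lt.resolve_right fun hca => hcb.2.2.2 a hab.1 ⟨hca, hab.2.2.1⟩).symm

theorem le_fst_of_snd_lt (h𝓕 : IsChain (· ≤ ·) 𝓕) (hab : ConsecPair 𝓕 a b)
    (hcd : ConsecPair 𝓕 c d) (hbd : b < d) : b ≤ c := by
  rcases h𝓕.total hab.2.1 hcd.1 with hbc | hcb
  · exact hbc
  · exact hcb.eq_or_lt.elim ge_of_eq fun hcb => (hcd.2.2.2 b hab.2.1 ⟨hcb, hbd⟩).elim

end ConsecPair

namespace ConsecPairs

variable {𝓕 : Set (Submodule ℂ V)} [Fact (IsChain (· ≤ ·) 𝓕)]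

noncomputable instance : LinearOrder (ConsecPairs 𝓕) where
  __ := PartialOrder.lift (fun p : ConsecPairs 𝓕 => p.1.2) fun p q (h : p.1.2 = q.1.2) =>
    Subtype.ext (Prod.ext (ConsecPair.fst_eq_of_snd_eq Fact.out p.2 (h ▸ q.2)) h)
  le_total p q := (Fact.out : IsChain (· ≤ ·) 𝓕).total p.2.2.1 q.2.2.1
  toDecidableLE := Classical.decRel _

theorem le_iff {p q : ConsecPairs 𝓕} : p ≤ q ↔ p.1.2 ≤ q.1.2 := Iff.rfl

theorem lt_iff {p q : ConsecPairs 𝓕} : p < q ↔ p.1.2 ≤ q.1.1 := by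
  refine ⟨fun h => ConsecPair.le_fst_of_snd_lt Fact.out p.2 q.2 (lt_of_le_not_ge h.1 h.2),
    fun h => lt_of_le_of_ne (h.trans q.2.2.2.1.le) fun he => ?_⟩
  exact (h.trans_lt q.2.2.2.1).ne (congrArg (·.1.2) he)

end ConsecPairs

/-- Every generalized flag in a countable-dimensional complex vector space admits a
compatible basis: there is a basis `E` and a surjection `σ` from the index set of `E`
onto the set `A` of pairs of consecutive members such that for each pair `α = (F'_α, F''_α)`,
`F'_α` is the span of the basis vectors with `σ(e) ≺ α` (i.e. `F''_{σ(e)} ≤ F'_α`) and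
`F''_α` is the span of the basis vectors with `σ(e) ⪯ α` (i.e. `F''_{σ(e)} ≤ F''_α`). -/
theorem exists_compatible_basis
    (hV : Module.rank ℂ V = Cardinal.aleph0)
    (𝓕 : Set (Submodule ℂ V)) (h𝓕 : IsGenFlag 𝓕) :
    ∃ (ι : Type) (E : Module.Basis ι ℂ V)
      (σ : ι → {p : Submodule ℂ V × Submodule ℂ V // ConsecPair 𝓕 p.1 p.2}),
      Function.Surjective σ ∧
      ∀ p : {p : Submodule ℂ V × Submodule ℂ V // ConsecPair 𝓕 p.1 p.2},
        p.val.1 = Submodule.span ℂ ((⇑E) '' {i | (σ i).val.2 ≤ p.val.1}) ∧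
        p.val.2 = Submodule.span ℂ ((⇑E) '' {i | (σ i).val.2 ≤ p.val.2}) := by
  have : Fact (IsChain (· ≤ ·) 𝓕) := ⟨h𝓕.chain⟩
  let G : GenFlagFamily ℂ V (ConsecPairs 𝓕) :=
    { lower := fun p => p.1.1
      upper := fun p => p.1.2
      lower_lt_upper := fun p => p.2.2.2.1
      upper_le_lower := fun _ _ h => ConsecPairs.lt_iff.1 h
      exists_mem_upper_notMem_lower := fun v hv => by
        obtain ⟨F', F'', hF, hv'', hv'⟩ := h𝓕.cover v hv
        exact ⟨⟨(F', F''), hF⟩, hv'', hv'⟩ }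
  obtain ⟨ι, E, σ, hσ, hE⟩ := G.exists_compatible_basis hV.le
  simp only [ConsecPairs.lt_iff, ConsecPairs.le_iff] at hE
  exact ⟨ι, E, σ, hσ, hE⟩
end

section
/- Let V be a countable-dimensional complex vector space with a nondegenerate symmetric or skew-symmetric bilinear form β, and let F be a β-isotropic generalized flag. If a β-isotropic generalized flag G compatible with a β-isotropic basis L via a surjection σ: L → A has the property that the orthogonality involution i_G(F) = F^⊥ induces the involution i_A on A, then σ ∘ i_L = i_A ∘ σ, where i_L is the involution of L defining its β-isotropy. -/
/-!
The vector `L (iL i)` pairs nontrivially only with `L i`, and `L i` lies in `(σ i).2` but not in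
`(σ i).1`. Hence `L (iL i)` lies in `(σ i).1^⊥ = (iA (σ i)).2` but not in
`(σ i).2^⊥ = (iA (σ i)).1`. By compatibility it also lies in `(σ (iL i)).2` but not in
`(σ (iL i)).1`, and in a chain a consecutive pair is determined by any vector it separates.
-/

open Submodule

variable {V : Type*} [AddCommGroup V] [Module ℂ V]

namespace ConsecPair

variable {𝓖 : Set (Submodule ℂ V)} {F' F'' G : Submodule ℂ V}

theorem snd_le_of_fst_lt (hc : IsChain (· ≤ ·) 𝓖) (h : ConsecPair 𝓖 F' F'') (hG : G ∈ 𝓖)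
    (hlt : F' < G) : F'' ≤ G :=
  hc.le_of_not_gt hG h.2.1 fun hG'' => h.2.2.2 G hG ⟨hlt, hG''⟩

theorem le_fst_of_lt_snd (hc : IsChain (· ≤ ·) 𝓖) (h : ConsecPair 𝓖 F' F'') (hG : G ∈ 𝓖)
    (hlt : G < F'') : G ≤ F' :=
  hc.le_of_not_gt h.1 hG fun hG' => h.2.2.2 G hG ⟨hG', hlt⟩

theorem eq_of_mem_of_notMem (hc : IsChain (· ≤ ·) 𝓖) {G' G'' : Submodule ℂ V}
    (hF : ConsecPair 𝓖 F' F'') (hG : ConsecPair 𝓖 G' G'') {v : V}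
    (hvF'' : v ∈ F'') (hvF' : v ∉ F') (hvG'' : v ∈ G'') (hvG' : v ∉ G') :
    F' = G' ∧ F'' = G'' := by
  have hGF : G' < F'' := hc.lt_of_not_ge hF.2.1 hG.1 fun h => hvG' (h hvF'')
  have hFG : F' < G'' := hc.lt_of_not_ge hG.2.1 hF.1 fun h => hvF' (h hvG'')
  exact ⟨le_antisymm (hG.le_fst_of_lt_snd hc hF.1 hFG) (hF.le_fst_of_lt_snd hc hG.1 hGF),
    le_antisymm (hF.snd_le_of_fst_lt hc hG.2.1 hFG) (hG.snd_le_of_fst_lt hc hF.2.1 hGF)⟩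

end ConsecPair

namespace LinearMap.BilinForm

variable {R M : Type*} [CommRing R] [AddCommGroup M] [Module R M] {B : LinearMap.BilinForm R M}

theorem mem_orthogonal_span_iff {s : Set M} {v : M} :
    v ∈ B.orthogonal (span R s) ↔ ∀ x ∈ s, B x v = 0 :=
  span_le (p := LinearMap.ker (B.flip v))

theorem apply_basis_partner_ne_zero [Nontrivial R] (hB : B.SeparatingLeft) {ι : Type*}
    (L : Module.Basis ι R M) {iL : ι → ι} (hLiso : ∀ i j : ι, j ≠ iL i → B (L i) (L j) = 0)
    (i : ι) : B (L i) (L (iL i)) ≠ 0 := by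
  intro h
  have hBi : B (L i) = 0 := L.ext fun j => by
    by_cases hj : j = iL i
    · subst hj; simpa using h
    · simpa using hLiso i j hj
  exact L.ne_zero i (hB _ fun y => by rw [hBi, LinearMap.zero_apply])

end LinearMap.BilinForm

theorem sigma_comm_involution_general
    (β : LinearMap.BilinForm ℂ V) (hβnd : β.Nondegenerate)
    (ι : Type*) (L : Module.Basis ι ℂ V)
    (iL : ι → ι) (hiL : Function.Involutive iL)
    (hLiso : ∀ i j : ι, j ≠ iL i → β (L i) (L j) = 0)
    (𝓖 : Set (Submodule ℂ V)) (h𝓖 : IsGenFlag 𝓖)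
    (σ : ι → {p : Submodule ℂ V × Submodule ℂ V // ConsecPair 𝓖 p.1 p.2})
    (hcompat : ∀ p : {p : Submodule ℂ V × Submodule ℂ V // ConsecPair 𝓖 p.1 p.2},
      p.val.1 = Submodule.span ℂ ((⇑L) '' {i | (σ i).val.2 ≤ p.val.1}) ∧
      p.val.2 = Submodule.span ℂ ((⇑L) '' {i | (σ i).val.2 ≤ p.val.2}))
    (iA : {p : Submodule ℂ V × Submodule ℂ V // ConsecPair 𝓖 p.1 p.2} →
          {p : Submodule ℂ V × Submodule ℂ V // ConsecPair 𝓖 p.1 p.2})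
    (hiA : ∀ p, ((iA p).val.1 = β.orthogonal p.val.2) ∧ ((iA p).val.2 = β.orthogonal p.val.1)) :
    σ ∘ iL = iA ∘ σ := by
  funext i
  have hσmem : ∀ k, L k ∈ (σ k).val.2 ∧ L k ∉ (σ k).val.1 := fun k => by
    rw [(hcompat (σ k)).1, (hcompat (σ k)).2, L.self_mem_span_image, L.self_mem_span_image,
      Set.mem_ofPred_eq, Set.mem_ofPred_eq]
    exact ⟨le_rfl, (σ k).prop.2.2.1.not_ge⟩
  have hpartner_mem : L (iL i) ∈ β.orthogonal (σ i).val.1 := by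
    rw [(hcompat (σ i)).1, LinearMap.BilinForm.mem_orthogonal_span_iff]
    rintro _ ⟨j, hj, rfl⟩
    have hji : j ≠ i := by
      rintro rfl
      exact (σ j).prop.2.2.1.not_ge hj
    exact hLiso j (iL i) (hiL.injective.ne hji).symm
  have hpartner_notMem : L (iL i) ∉ β.orthogonal (σ i).val.2 := fun h =>
    LinearMap.BilinForm.apply_basis_partner_ne_zero hβnd.1 L hLiso i (h _ (hσmem i).1)
  obtain ⟨hfst, hsnd⟩ := ConsecPair.eq_of_mem_of_notMem h𝓖.chain (σ (iL i)).prop (iA (σ i)).prop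
    (hσmem (iL i)).1 (hσmem (iL i)).2 ((hiA (σ i)).2 ▸ hpartner_mem)
    ((hiA (σ i)).1 ▸ hpartner_notMem)
  exact Subtype.ext (Prod.ext hfst hsnd)

/-- If a `β`-isotropic generalized flag `𝓖` is compatible with a `β`-isotropic basis `L`
via the surjection `σ : L → A` and the orthogonality involution of `𝓖` induces the
involution `i_A` on the index set `A` of consecutive pairs, then `σ ∘ i_L = i_A ∘ σ`. -/
theorem sigma_comm_involution
    (hV : Module.rank ℂ V = Cardinal.aleph0)
    (β : LinearMap.BilinForm ℂ V) (hβnd : β.Nondegenerate)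
    (hβsym : β.IsSymm ∨ β.IsAlt)
    (ι : Type*) (L : Module.Basis ι ℂ V)
    (iL : ι → ι) (hiL : Function.Involutive iL)
    (hiLfix : {i | iL i = i}.Subsingleton)
    (hLiso : ∀ i j : ι, j ≠ iL i → β (L i) (L j) = 0)
    (𝓖 : Set (Submodule ℂ V)) (h𝓖 : IsGenFlag 𝓖)
    (hiso : ∀ F ∈ 𝓖, β.orthogonal F ∈ 𝓖)
    (hanti : ∀ F ∈ 𝓖, ∀ H ∈ 𝓖, F ≤ H → β.orthogonal H ≤ β.orthogonal F)
    (hinv : ∀ F ∈ 𝓖, β.orthogonal (β.orthogonal F) = F)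
    (σ : ι → {p : Submodule ℂ V × Submodule ℂ V // ConsecPair 𝓖 p.1 p.2})
    (hσ : Function.Surjective σ)
    (hcompat : ∀ p : {p : Submodule ℂ V × Submodule ℂ V // ConsecPair 𝓖 p.1 p.2},
      p.val.1 = Submodule.span ℂ ((⇑L) '' {i | (σ i).val.2 ≤ p.val.1}) ∧
      p.val.2 = Submodule.span ℂ ((⇑L) '' {i | (σ i).val.2 ≤ p.val.2}))
    (iA : {p : Submodule ℂ V × Submodule ℂ V // ConsecPair 𝓖 p.1 p.2} →
          {p : Submodule ℂ V × Submodule ℂ V // ConsecPair 𝓖 p.1 p.2})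
    (hiA : ∀ p, ((iA p).val.1 = β.orthogonal p.val.2) ∧ ((iA p).val.2 = β.orthogonal p.val.1)) :
    σ ∘ iL = iA ∘ σ :=
  sigma_comm_involution_general β hβnd ι L iL hiL hLiso 𝓖 h𝓖 σ hcompat iA hiA
end

section
/- Let E be a countable set with a linear order ≤_B, let W be the group of permutations of E fixing all but finitely many elements, and for w ∈ W let ℓ(w) be the minimal length of an expression of w as a product of transpositions of consecutive elements of (E, ≤_B), with ℓ(w) = ∞ if no such expression exists. Then ℓ(w) = ∞ if and only if there exists e ∈ E such that the set {e' ∈ E : e <_B e' <_B w(e)} is infinite. -/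
variable {E : Type*} [LinearOrder E]

/-- A transposition of two consecutive elements of the linearly ordered set `E`. -/
def IsConsecSwap (s : Equiv.Perm E) : Prop :=
  ∃ e e' : E, e ⋖ e' ∧ s = Equiv.swap e e'

/-- The length of a finitary permutation with respect to the generating set of
transpositions of consecutive elements: the minimal length of an expression of `w`
as a product of such transpositions, or `⊤` if no such expression exists. -/
noncomputable def ellB (w : Equiv.Perm E) : ℕ∞ :=
  sInf {n : ℕ∞ | ∃ L : List (Equiv.Perm E),
    (∀ s ∈ L, IsConsecSwap s) ∧ L.prod = w ∧ (L.length : ℕ∞) = n}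

/-! Permutations `w` for which every interval `[[e, w e]]` is finite form a subgroup containing
the consecutive transpositions, so products of these never move a point across an infinite
interval. Conversely, let `w` be finitary with every upward interval `(e, w e)` finite. Counting
moved points below a cut shows that whenever `w` moves a point down across `x`, it moves some point
up across `x`; hence the downward intervals are finite too. Then `w` has finitely many inversions,
and if `w ≠ 1` it has a descent `w b < w a` at a covering pair `a ⋖ b`. Multiplying by `swap a b`
removes the inversion `(a, b)` and creates none, so induction on the number of inversions writes
`w` as a product of consecutive transpositions. -/

open Set Equiv

def finitary (α : Type*) : Subgroup (Perm α) where
  carrier := {w | {x | w x ≠ x}.Finite}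
  one_mem' := by simp
  mul_mem' {v u} hv hu := (hu.union hv).subset fun x hx => by
    by_cases hux : u x = x
    · exact Or.inr (by simpa [hux] using hx)
    · exact Or.inl hux
  inv_mem' {w} hw := hw.subset fun x hx hwx => hx (Perm.inv_eq_iff_eq.2 hwx.symm)

theorem swap_mem_finitary {α : Type*} [DecidableEq α] (a b : α) : swap a b ∈ finitary α :=
  (toFinite {a, b}).subset fun x hx => by simpa using (swap_apply_ne_self_iff.1 hx).2

def finiteDisplacement (E : Type*) [LinearOrder E] : Subgroup (Perm E) where
  carrier := {w | ∀ x, (uIcc x (w x)).Finite}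
  one_mem' := by simp
  mul_mem' {v u} hv hu x := ((hu x).union (hv (u x))).subset uIcc_subset_uIcc_union_uIcc
  inv_mem' {w} hw x := by simpa [uIcc_comm] using hw (w⁻¹ x)

theorem swap_mem_finiteDisplacement {a b : E} (h : (uIcc a b).Finite) :
    swap a b ∈ finiteDisplacement E := fun x =>
  (h.union (finite_singleton x)).subset <| by
    rcases eq_or_ne x a with rfl | hxa
    · simp
    rcases eq_or_ne x b with rfl | hxb
    · simp [uIcc_comm]
    · simp [swap_apply_of_ne_of_ne hxa hxb]

theorem CovBy.swap_mem_finiteDisplacement {a b : E} (h : a ⋖ b) :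
    swap a b ∈ finiteDisplacement E :=
  _root_.swap_mem_finiteDisplacement <| by simp [uIcc_of_le h.le, h.Icc_eq]

theorem Set.Finite.Icc_of_Ioo {α : Type*} [PartialOrder α] {a b : α} (h : (Ioo a b).Finite) : (Icc a b).Finite :=
  (Icc_sdiff_both (a := a) (b := b) ▸ h).of_sdiff (toFinite _)

theorem exists_lt_le_apply_of_apply_lt {w : Perm E} (hw : w ∈ finitary E) {f x : E}
    (hf : w f < x) (hx : x ≤ f) : ∃ g, g < x ∧ x ≤ w g := by
  by_contra! h
  set A := {g | w g ≠ g} ∩ Iio x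
  have hmaps : MapsTo w A A := fun g hg => ⟨w.injective.ne hg.1, h g hg.2⟩
  have hbij := ((hw.subset inter_subset_left).injOn_iff_bijOn_of_mapsTo hmaps).1
    w.injective.injOn
  have hwf : w f ∈ A := ⟨w.injective.ne (hf.trans_le hx).ne, hf⟩
  obtain ⟨g, hg, hgf⟩ := hbij.surjOn hwf
  exact (w.injective hgf ▸ hg.2 : f < x).not_ge hx

theorem mem_finiteDisplacement_of_Ioo_finite {w : Perm E} (hw : w ∈ finitary E)
    (h : ∀ x, (Ioo x (w x)).Finite) : w ∈ finiteDisplacement E := by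
  intro e
  rcases le_or_gt e (w e) with hle | hlt
  · rw [uIcc_of_le hle]
    exact (h e).Icc_of_Ioo
  rw [uIcc_of_ge hlt.le]
  refine (hw.union (hw.biUnion fun g _ => (h g).Icc_of_Ioo)).subset fun x hx => ?_
  by_cases hwx : w x = x
  · have hex : w e < x := hx.1.lt_of_ne fun heq => w.injective.ne hlt.ne (heq ▸ hwx)
    obtain ⟨g, hgx, hxg⟩ := exists_lt_le_apply_of_apply_lt hw hex hx.2
    exact Or.inr (mem_biUnion (hgx.trans_le hxg).ne' ⟨hgx.le, hxg⟩)
  · exact Or.inl hwx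

def inversions (w : Perm E) : Set (E × E) := {p | p.1 < p.2 ∧ w p.2 < w p.1}

theorem inversions_finite {w : Perm E} (hF : w ∈ finitary E) (hD : w ∈ finiteDisplacement E) :
    (inversions w).Finite := by
  set U := ⋃ g ∈ {e | w e ≠ e}, uIcc g (w g)
  have hU : U.Finite := hF.biUnion fun g _ => hD g
  have mem_U {x : E} (hx : w x ≠ x) : x ∈ U := mem_biUnion hx left_mem_uIcc
  refine (hU.prod hU).subset ?_
  rintro ⟨x, y⟩ ⟨hxy : x < y, hinv : w y < w x⟩
  change x ∈ U ∧ y ∈ U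
  by_cases hwx : w x = x
  · have hwy : w y ≠ y := fun h => (hinv.trans_eq hwx).not_ge (hxy.le.trans_eq h.symm)
    exact ⟨mem_biUnion hwy (mem_uIcc_of_ge (hinv.trans_eq hwx).le hxy.le), mem_U hwy⟩
  by_cases hwy : w y = y
  · exact ⟨mem_U hwx, mem_biUnion hwx (mem_uIcc_of_le hxy.le (hwy.symm.trans_lt hinv).le)⟩
  · exact ⟨mem_U hwx, mem_U hwy⟩

theorem CovBy.swap_lt_swap {a b x y : E} (hab : a ⋖ b) (hxy : x < y) (hne : (x, y) ≠ (a, b)) :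
    swap a b x < swap a b y := by
  have hlt := hab.1
  have hcov := hab.2
  simp only [swap_apply_def]
  split_ifs <;> grind

theorem ncard_inversions_mul_swap_lt {w : Perm E} (hfin : (inversions w).Finite) {a b : E}
    (hab : a ⋖ b) (hd : w b < w a) :
    (inversions (w * swap a b)).ncard < (inversions w).ncard := by
  set σ := (swap a b).prodCongr (swap a b)
  have hmaps : MapsTo σ (inversions (w * swap a b)) (inversions w \ {(a, b)}) := by
    rintro ⟨x, y⟩ ⟨hxy, hinv⟩
    have hne : (x, y) ≠ (a, b) := by
      rintro ⟨⟩
      simp only [Perm.coe_mul, Function.comp_apply, swap_apply_right, swap_apply_left] at hinv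
      exact hd.not_gt hinv
    refine ⟨⟨hab.swap_lt_swap hxy hne, hinv⟩, fun h => ?_⟩
    simp only [σ, prodCongr_apply, Prod.map, mem_singleton_iff, Prod.mk.injEq,
      swap_apply_eq_iff, swap_apply_left, swap_apply_right] at h
    exact hab.1.not_gt (h.1 ▸ h.2 ▸ hxy)
  calc (inversions (w * swap a b)).ncard
      ≤ (inversions w \ {(a, b)}).ncard :=
        ncard_le_ncard_of_injOn σ hmaps σ.injective.injOn hfin.sdiff
    _ < (inversions w).ncard := ncard_sdiff_singleton_lt_of_mem ⟨hab.1, hd⟩ hfin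

theorem exists_covBy_lt_of_Icc_finite {β : Type*} [LinearOrder β] {f : E → β} {x y : E}
    (hfin : (Icc x y).Finite) (hxy : x ≤ y) (hf : f y < f x) : ∃ a b, a ⋖ b ∧ f b < f a := by
  obtain ⟨b, ⟨hb, hfb⟩, hb_min⟩ := exists_min_image {z ∈ Icc x y | f z < f x} id
    (hfin.subset (sep_subset _ _)) ⟨y, ⟨hxy, le_rfl⟩, hf⟩
  have hxb : x < b := hb.1.lt_of_ne fun h => (h ▸ hfb).false
  obtain ⟨a, ha, ha_max⟩ := exists_max_image (Ico x b) id
    (hfin.subset (Ico_subset_Icc_self.trans (Icc_subset_Icc_right hb.2))) ⟨x, le_rfl, hxb⟩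
  have hab : a ⋖ b := ⟨ha.2, fun c hac hcb => hac.not_ge (ha_max c ⟨ha.1.trans hac.le, hcb⟩)⟩
  have hfa : f x ≤ f a :=
    le_of_not_gt fun h => ha.2.not_ge (hb_min a ⟨⟨ha.1, ha.2.le.trans hb.2⟩, h⟩)
  exact ⟨a, b, hab, hfb.trans_le hfa⟩

theorem exists_apply_lt_self_and_apply_lt_apply_apply {w : Perm E} (hw : w ∈ finitary E)
    (h1 : w ≠ 1) : ∃ y, w y < y ∧ w y < w (w y) := by
  have hne : {e | w e ≠ e}.Nonempty := by
    by_contra! h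
    exact h1 (Perm.ext fun e => by_contra fun he => h.subset he)
  obtain ⟨m, hm, hm_min⟩ := exists_min_image _ id hw hne
  have hm_inv : w⁻¹ m ≠ m := fun h => hm (Perm.inv_eq_iff_eq.1 h).symm
  have hm_inv_mem : w (w⁻¹ m) ≠ w⁻¹ m := by simpa using hm_inv.symm
  refine ⟨w⁻¹ m, ?_, ?_⟩ <;> simp only [Perm.coe_inv, apply_symm_apply]
  · exact (hm_min _ hm_inv_mem).lt_of_ne hm_inv.symm
  · exact (hm_min _ (w.injective.ne hm)).lt_of_ne (Ne.symm hm)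

theorem exists_covBy_apply_lt {w : Perm E} (hF : w ∈ finitary E) (hD : w ∈ finiteDisplacement E)
    (h1 : w ≠ 1) : ∃ a b, a ⋖ b ∧ w b < w a := by
  obtain ⟨y, hy, hwy⟩ := exists_apply_lt_self_and_apply_lt_apply_apply hF h1
  exact exists_covBy_lt_of_Icc_finite ((hD y).subset Icc_subset_uIcc') hy.le hwy

theorem mem_closure_consecSwaps {w : Perm E} (hF : w ∈ finitary E)
    (hD : w ∈ finiteDisplacement E) : w ∈ Submonoid.closure {s | IsConsecSwap s} := by
  induction hn : (inversions w).ncard using Nat.strong_induction_on generalizing w with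
  | _ n ih =>
    by_cases h1 : w = 1
    · exact h1 ▸ one_mem _
    obtain ⟨a, b, hab, hd⟩ := exists_covBy_apply_lt hF hD h1
    have hv : w * swap a b ∈ Submonoid.closure {s | IsConsecSwap s} :=
      ih _ (hn ▸ ncard_inversions_mul_swap_lt (inversions_finite hF hD) hab hd)
        (mul_mem hF (swap_mem_finitary a b)) (mul_mem hD hab.swap_mem_finiteDisplacement) rfl
    simpa using mul_mem hv (Submonoid.subset_closure ⟨a, b, hab, rfl⟩)

theorem closure_consecSwaps_le :
    Submonoid.closure {s : Perm E | IsConsecSwap s} ≤ (finiteDisplacement E).toSubmonoid :=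
  Submonoid.closure_le.2 fun _ ⟨_, _, hab, hs⟩ => hs ▸ hab.swap_mem_finiteDisplacement

theorem ellB_ne_top_iff {w : Perm E} :
    ellB w ≠ ⊤ ↔ w ∈ Submonoid.closure {s | IsConsecSwap s} := by
  rw [ellB, Ne, sInf_eq_top]
  push Not
  constructor
  · rintro ⟨_, ⟨L, hL, rfl, rfl⟩, -⟩
    exact list_prod_mem fun s hs => Submonoid.subset_closure (hL s hs)
  · intro h
    obtain ⟨L, hL, rfl⟩ := Submonoid.exists_list_of_mem_closure h
    exact ⟨_, ⟨L, hL, rfl, rfl⟩, ENat.natCast_ne_top _⟩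

theorem length_infinite_iff_general
    (w : Equiv.Perm E) (hw : {e : E | w e ≠ e}.Finite) :
    ellB w = ⊤ ↔ ∃ e : E, {e' : E | e < e' ∧ e' < w e}.Infinite := by
  rw [← not_iff_not, ← Ne, ellB_ne_top_iff]
  push Not
  refine ⟨fun h e => ?_, fun h => ?_⟩
  · exact (closure_consecSwaps_le h e).subset (Ioo_subset_Icc_self.trans Icc_subset_uIcc)
  · exact mem_closure_consecSwaps hw (mem_finiteDisplacement_of_Ioo_finite hw h)

/-- For a finitary permutation `w` of a countable linearly ordered set `E`, the length
`ℓ(w)` is infinite if and only if there exists `e ∈ E` such that the interval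
`{e' : e < e' < w(e)}` is infinite. -/
theorem length_infinite_iff
    [Countable E] (w : Equiv.Perm E) (hw : {e : E | w e ≠ e}.Finite) :
    ellB w = ⊤ ↔ ∃ e : E, {e' : E | e < e' ∧ e' < w e}.Infinite :=
  length_infinite_iff_general w hw
end

section
/- Let V = ⋃ V_n be an exhaustion of a countable-dimensional complex vector space by finite-dimensional subspaces, with a Hermitian (or bilinear) form ω such that each vector of a fixed basis E lying outside V_n is ω-orthogonal to V_n. Then a subspace A of V compatible with E (i.e. spanned by A ∩ V_n together with basis vectors outside some V_{n₀}) is nondegenerate with respect to ω if and only if the restriction of ω to A ∩ V_n is nondegenerate for all sufficiently large n. -/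
open Submodule

/-!
If `A` is nondegenerate and `n ≥ n₀`, every `y ∈ A` splits as `y₁ + y₂` with `y₁ ∈ A ∩ Vₙ`
and `y₂` in the span of the basis vectors `eᵢ ∈ A` with `i ≥ n`, which are orthogonal to `Vₙ`;
so a vector of `A ∩ Vₙ` orthogonal to `A ∩ Vₙ` is orthogonal to all of `A`, hence zero.
Conversely, a vector of `A` orthogonal to `A` lies in `Vₙ` for all large `n`, and is then
orthogonal to `A ∩ Vₙ` in particular.
-/

section Nondegenerate

variable {R M : Type*} [CommSemiring R] [AddCommMonoid M] [Module R M] {σ : R →+* R}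

def IsNondegenerateOn (ω : M →ₗ[R] M →ₛₗ[σ] R) (A : Submodule R M) : Prop :=
  ∀ x ∈ A, (∀ y ∈ A, ω x y = 0) → x = 0

theorem IsNondegenerateOn.inf_of_le_sup {ω : M →ₗ[R] M →ₛₗ[σ] R} {A W B : Submodule R M}
    (hA : IsNondegenerateOn ω A) (hsplit : A ≤ (A ⊓ W) ⊔ B)
    (horth : ∀ x ∈ W, ∀ y ∈ B, ω x y = 0) :
    IsNondegenerateOn ω (A ⊓ W) := by
  rintro x ⟨hxA, hxW⟩ hx
  refine hA x hxA fun y hy => ?_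
  obtain ⟨y₁, hy₁, y₂, hy₂, rfl⟩ := mem_sup.mp (hsplit hy)
  rw [map_add, hx y₁ hy₁, horth x hxW y₂ hy₂, add_zero]

end Nondegenerate

section Exhaustion

variable {R M : Type*} [Semiring R] [AddCommMonoid M] [Module R M]

theorem monotone_span_image_lt (v : ℕ → M) : Monotone fun n => span R (v '' {i | i < n}) :=
  fun _ _ hmn => span_mono <| Set.image_mono fun _ hi => lt_of_lt_of_le hi hmn

theorem Module.Basis.exists_mem_span_image_lt (E : Module.Basis ℕ R M) (x : M) :
    ∃ N, ∀ n, N ≤ n → x ∈ span R (E '' {i | i < n}) := by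
  obtain ⟨N, hN⟩ := (E.repr x).support.exists_nat_subset_range
  refine ⟨N, fun n hn => monotone_span_image_lt E hn ?_⟩
  exact span_mono (Set.image_mono fun i hi => Finset.mem_range.mp (hN hi))
    (E.mem_span_repr_support x)

theorem le_inf_span_image_lt_sup_span_image_ge {v : ℕ → M} {A : Submodule R M} {n₀ n : ℕ}
    (hA : A ≤ (A ⊓ span R (v '' {i | i < n₀})) ⊔ span R (v '' {i | n₀ ≤ i ∧ v i ∈ A}))
    (hn : n₀ ≤ n) :
    A ≤ (A ⊓ span R (v '' {i | i < n})) ⊔ span R (v '' {i | n ≤ i ∧ v i ∈ A}) := by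
  refine hA.trans <| sup_le
    (le_sup_of_le_left <| inf_le_inf_left _ <| monotone_span_image_lt v hn) ?_
  rw [span_le]
  rintro _ ⟨i, ⟨-, hiA⟩, rfl⟩
  rcases lt_or_ge i n with hin | hni
  · exact mem_sup_left ⟨hiA, subset_span ⟨i, hin, rfl⟩⟩
  · exact mem_sup_right (subset_span ⟨i, ⟨hni, hiA⟩, rfl⟩)

end Exhaustion

theorem nondegenerate_iff_eventually_nondegenerate_general
    {V : Type*} [AddCommGroup V] [Module ℂ V]
    (E : Module.Basis ℕ ℂ V)
    (Vn : ℕ → Submodule ℂ V) (hVn : ∀ n, Vn n = Submodule.span ℂ (E '' {i | i < n}))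
    (ω : V →ₗ[ℂ] V →ₛₗ[starRingEnd ℂ] ℂ)
    (hherm : ∀ x y : V, ω y x = star (ω x y))
    (horth : ∀ n : ℕ, ∀ i : ℕ, n ≤ i → ∀ v ∈ Vn n, ω (E i) v = 0)
    (A : Submodule ℂ V) (n₀ : ℕ)
    (hA : A = (A ⊓ Vn n₀) ⊔ Submodule.span ℂ (E '' {i | n₀ ≤ i ∧ E i ∈ A})) :
    (∀ x ∈ A, (∀ y ∈ A, ω x y = 0) → x = 0) ↔
    ∃ N : ℕ, ∀ n : ℕ, N ≤ n →
      ∀ x ∈ A ⊓ Vn n, (∀ y ∈ A ⊓ Vn n, ω x y = 0) → x = 0 := by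
  obtain rfl : Vn = fun n => span ℂ (E '' {i | i < n}) := funext hVn
  constructor
  · intro hnd
    refine ⟨n₀, fun n hn => IsNondegenerateOn.inf_of_le_sup hnd
      (le_inf_span_image_lt_sup_span_image_ge hA.le hn) fun x hx y hy => ?_⟩
    refine (span_le (p := LinearMap.ker (ω x))).2 ?_ hy
    rintro _ ⟨i, ⟨hni, -⟩, rfl⟩
    rw [SetLike.mem_coe, LinearMap.mem_ker, hherm (E i) x, horth n i hni x hx, star_zero]
  · rintro ⟨N, hN⟩ x hxA hx
    obtain ⟨m, hm⟩ := E.exists_mem_span_image_lt x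
    exact hN (max N m) (le_max_left _ _) x ⟨hxA, hm _ (le_max_right _ _)⟩ fun y hy => hx y hy.1

/-- Let `V` be countable-dimensional over `ℂ` with basis `(eᵢ)_{i ∈ ℕ}` and exhaustion
`Vₙ = span{eᵢ : i < n}`, and let `ω` be a nondegenerate Hermitian form such that every
basis vector outside `Vₙ` is orthogonal to `Vₙ`. If a subspace `A` is spanned by
`A ∩ V_{n₀}` together with the basis vectors of index `≥ n₀` that lie in `A`, then `A`
is nondegenerate with respect to `ω` if and only if the restriction of `ω` to `A ∩ Vₙ`
is nondegenerate for all sufficiently large `n`. -/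
theorem nondegenerate_iff_eventually_nondegenerate
    {V : Type*} [AddCommGroup V] [Module ℂ V]
    (E : Module.Basis ℕ ℂ V)
    (Vn : ℕ → Submodule ℂ V) (hVn : ∀ n, Vn n = Submodule.span ℂ (E '' {i | i < n}))
    (ω : V →ₗ[ℂ] V →ₛₗ[starRingEnd ℂ] ℂ)
    (hherm : ∀ x y : V, ω y x = star (ω x y))
    (hωnd : ∀ x : V, (∀ y : V, ω x y = 0) → x = 0)
    (horth : ∀ n : ℕ, ∀ i : ℕ, n ≤ i → ∀ v ∈ Vn n, ω (E i) v = 0)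
    (A : Submodule ℂ V) (n₀ : ℕ)
    (hA : A = (A ⊓ Vn n₀) ⊔ Submodule.span ℂ (E '' {i | n₀ ≤ i ∧ E i ∈ A})) :
    (∀ x ∈ A, (∀ y ∈ A, ω x y = 0) → x = 0) ↔
    ∃ N : ℕ, ∀ n : ℕ, N ≤ n →
      ∀ x ∈ A ⊓ Vn n, (∀ y ∈ A ⊓ Vn n, ω x y = 0) → x = 0 :=
  nondegenerate_iff_eventually_nondegenerate_general E Vn hVn ω hherm horth A n₀ hA
end

section
/- Let V be a countable-dimensional complex vector space with a quaternionic structure J (an antilinear automorphism with J² = −id). A chain {0 ⊂ F ⊂ V} with F a proper nonzero subspace is pseudo-quaternionic in the sense that F ∩ J(F) is not properly contained in F̃ ∩ J(F̃) for any subspace F̃ with dim F̃ = dim F and F̃ commensurable with F, if and only if the codimension of F ∩ J(F) in F is at most 1. -/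
/-!
`F ∩ J(F)` is the largest `J`-stable subspace of `F`. A nonzero `x` is never proportional to
`J x` (`J x = a x` would give `-x = |a|² x`), so a `J`-stable subspace not containing `x` meets
`span {x, J x}` trivially; hence `J`-stable subspaces grow two dimensions at a time and have even
dimension. If `F ∩ J(F)` has codimension at least two in `F`, adjoin `span {x, J x}` to it for
some `x ∈ F \ J(F)` and enlarge the result to a subspace `F̃` of dimension `dim F`; then
`F̃ ∩ J(F̃)` strictly contains `F ∩ J(F)`. If the codimension is at most one, a strictly larger
`F̃ ∩ J(F̃)` would have dimension at least `dim (F ∩ J(F)) + 2 > dim F̃`.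
-/

open Module Submodule

theorem Submodule.exists_le_finrank_eq {K V : Type*} [Field K] [AddCommGroup V] [Module K V]
    [FiniteDimensional K V] {p : Submodule K V} {k : ℕ} (hpk : finrank K p ≤ k)
    (hk : k ≤ finrank K V) : ∃ q : Submodule K V, p ≤ q ∧ finrank K q = k := by
  obtain ⟨d, hd⟩ := Nat.exists_eq_add_of_le hpk
  induction d generalizing p with
  | zero => exact ⟨p, le_rfl, hd.symm⟩
  | succ d ih =>
    obtain ⟨x, hx⟩ := SetLike.exists_not_mem_of_ne_top p fun hp ↦ by
      rw [hp, finrank_top] at hd; omega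
    obtain ⟨q, hpq, hq⟩ := ih (p := p ⊔ K ∙ x)
      (by rw [finrank_sup_span_singleton hx]; omega) (by rw [finrank_sup_span_singleton hx]; omega)
    exact ⟨q, le_sup_left.trans hpq, hq⟩

namespace QuaternionicStructure

variable {V : Type*} [AddCommGroup V] [Module ℂ V] {J : V →ₛₗ[starRingEnd ℂ] V}

theorem linearIndependent_pair (hJ : ∀ x, J (J x) = -x) {x : V} (hx : x ≠ 0) :
    LinearIndependent ℂ ![x, J x] := by
  rw [LinearIndependent.pair_iff' hx]
  intro a ha
  have h : (starRingEnd ℂ a * a + 1) • x = 0 := by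
    rw [add_smul, one_smul, ← smul_smul, ha, ← map_smulₛₗ, ha, hJ, neg_add_cancel]
  rw [Complex.conj_mul'] at h
  exact smul_ne_zero (by norm_cast; positivity) hx h

theorem finrank_span_pair (hJ : ∀ x, J (J x) = -x) {x : V} (hx : x ≠ 0) :
    finrank ℂ (span ℂ {x, J x}) = 2 := by
  rw [← Matrix.range_cons_cons_empty x (J x) ![],
    finrank_span_eq_card (linearIndependent_pair hJ hx), Fintype.card_fin]

theorem map_eq_comap (hJ : ∀ x, J (J x) = -x) (G : Submodule ℂ V) : G.map J = G.comap J := by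
  ext y
  refine ⟨?_, fun hy ↦ ⟨-J y, G.neg_mem hy, by rw [map_neg, hJ, neg_neg]⟩⟩
  rintro ⟨z, hz, rfl⟩
  simpa [mem_comap, hJ] using hz

theorem inf_map_le_comap (hJ : ∀ x, J (J x) = -x) (G : Submodule ℂ V) :
    G ⊓ G.map J ≤ (G ⊓ G.map J).comap J := by
  rw [map_eq_comap hJ]
  rintro y ⟨hyG, hJy⟩
  exact ⟨hJy, by simpa [mem_comap, hJ] using hyG⟩

theorem le_inf_map_of_le (hJ : ∀ x, J (J x) = -x) {H G : Submodule ℂ V} (hH : H ≤ H.comap J)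
    (hHG : H ≤ G) : H ≤ G ⊓ G.map J := by
  rw [map_eq_comap hJ]
  exact le_inf hHG (hH.trans (comap_mono hHG))

theorem span_pair_le_comap (hJ : ∀ x, J (J x) = -x) (x : V) :
    span ℂ {x, J x} ≤ (span ℂ {x, J x}).comap J := by
  refine span_le.mpr ?_
  rintro _ (rfl | rfl)
  · exact subset_span (by simp)
  · have hx : x ∈ span ℂ {x, J x} := subset_span (by simp)
    simpa [hJ] using (span ℂ {x, J x}).neg_mem hx

theorem sup_span_pair_le_comap (hJ : ∀ x, J (J x) = -x) {P : Submodule ℂ V}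
    (hP : P ≤ P.comap J) (x : V) : P ⊔ span ℂ {x, J x} ≤ (P ⊔ span ℂ {x, J x}).comap J :=
  sup_le (hP.trans (comap_mono le_sup_left))
    ((span_pair_le_comap hJ x).trans (comap_mono le_sup_right))

theorem disjoint_span_pair (hJ : ∀ x, J (J x) = -x) {P : Submodule ℂ V} (hP : P ≤ P.comap J)
    {x : V} (hx : x ∉ P) : Disjoint P (span ℂ {x, J x}) := by
  rw [disjoint_def]
  intro y hyP hyS
  by_contra hy
  have hx0 : x ≠ 0 := by rintro rfl; exact hx P.zero_mem
  have hle : span ℂ {y, J y} ≤ span ℂ {x, J x} :=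
    span_le.mpr (Set.pair_subset hyS (span_pair_le_comap hJ x hyS))
  have := FiniteDimensional.span_of_finite ℂ (Set.toFinite {x, J x})
  have heq := eq_of_le_of_finrank_eq hle
    (by rw [finrank_span_pair hJ hy, finrank_span_pair hJ hx0])
  exact hx (span_le.mpr (Set.pair_subset hyP (hP hyP)) (heq ▸ subset_span (by simp)))

theorem finrank_sup_span_pair [FiniteDimensional ℂ V] (hJ : ∀ x, J (J x) = -x)
    {P : Submodule ℂ V} (hP : P ≤ P.comap J) {x : V} (hx : x ∉ P) :
    finrank ℂ (P ⊔ span ℂ {x, J x} : Submodule ℂ V) = finrank ℂ P + 2 := by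
  have h := finrank_sup_add_finrank_inf_eq P (span ℂ {x, J x})
  rw [disjoint_iff.mp (disjoint_span_pair hJ hP hx), finrank_bot,
    finrank_span_pair hJ (by rintro rfl; exact hx P.zero_mem)] at h
  omega

theorem even_finrank_sub_finrank [FiniteDimensional ℂ V] (hJ : ∀ x, J (J x) = -x)
    {P W : Submodule ℂ V} (hP : P ≤ P.comap J) (hW : W ≤ W.comap J) (hPW : P ≤ W) :
    Even (finrank ℂ W - finrank ℂ P) := by
  induction P using WellFoundedGT.induction with
  | _ P ih =>
    obtain rfl | hlt := hPW.eq_or_lt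
    · simp
    obtain ⟨x, hxW, hxP⟩ := SetLike.exists_of_lt hlt
    have hle : P ⊔ span ℂ {x, J x} ≤ W :=
      sup_le hPW (span_le.mpr (Set.pair_subset hxW (hW hxW)))
    obtain ⟨r, hr⟩ := ih _ (left_lt_sup.mpr fun h ↦ hxP (h (subset_span (by simp))))
      (sup_span_pair_le_comap hJ hP x) hle
    have hrank := finrank_sup_span_pair hJ hP hxP
    have hmono := Submodule.finrank_mono hle
    exact ⟨r + 1, by omega⟩

theorem even_finrank_of_le_comap [FiniteDimensional ℂ V] (hJ : ∀ x, J (J x) = -x)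
    {W : Submodule ℂ V} (hW : W ≤ W.comap J) : Even (finrank ℂ W) := by
  simpa using even_finrank_sub_finrank hJ (P := ⊥) (by simp) hW bot_le

end QuaternionicStructure

open QuaternionicStructure in
theorem pseudo_quaternionic_iff_codim_le_one_general
    {V : Type*} [AddCommGroup V] [Module ℂ V] [FiniteDimensional ℂ V]
    (J : V →ₛₗ[starRingEnd ℂ] V) (hJ : ∀ x : V, J (J x) = -x)
    (F : Submodule ℂ V) :
    (∀ F' : Submodule ℂ V, finrank ℂ F' = finrank ℂ F →
      ¬ (F ⊓ Submodule.map J F < F' ⊓ Submodule.map J F')) ↔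
    finrank ℂ F ≤ finrank ℂ (F ⊓ Submodule.map J F : Submodule ℂ V) + 1 := by
  have hW := inf_map_le_comap hJ F
  set W := F ⊓ F.map J
  constructor
  · intro hmax
    by_contra! hcodim
    obtain ⟨x, -, hxW⟩ := SetLike.exists_of_lt <|
      inf_le_left.lt_of_ne fun h : W = F ↦ by rw [h] at hcodim; omega
    obtain ⟨F', hF₀F', hF'⟩ := Submodule.exists_le_finrank_eq (p := W ⊔ span ℂ {x, J x})
      (by rw [finrank_sup_span_pair hJ hW hxW]; omega) F.finrank_le
    have hlt : W < W ⊔ span ℂ {x, J x} :=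
      left_lt_sup.mpr fun h ↦ hxW (h (subset_span (by simp)))
    exact hmax F' hF' (hlt.trans_le (le_inf_map_of_le hJ (sup_span_pair_le_comap hJ hW x) hF₀F'))
  · intro hcodim F' hF' hlt
    have hlt_rank := Submodule.finrank_lt_finrank_of_lt hlt
    have hle_rank := Submodule.finrank_mono (inf_le_left : F' ⊓ F'.map J ≤ F')
    obtain ⟨r, hr⟩ := even_finrank_of_le_comap hJ hW
    obtain ⟨s, hs⟩ := even_finrank_of_le_comap hJ (inf_map_le_comap hJ F')
    omega

/-- Let `V` be a `2m`-dimensional complex vector space with a quaternionic structure `J`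
(an antilinear automorphism with `J² = -id`). A proper nonzero subspace `F` is
pseudo-quaternionic — i.e. `F ∩ J(F)` is not properly contained in `F̃ ∩ J(F̃)` for any
subspace `F̃` of the same dimension — if and only if the codimension of `F ∩ J(F)` in `F`
is at most `1`. -/
theorem pseudo_quaternionic_iff_codim_le_one
    {V : Type*} [AddCommGroup V] [Module ℂ V] [FiniteDimensional ℂ V]
    (m : ℕ) (hdim : finrank ℂ V = 2 * m)
    (J : V →ₛₗ[starRingEnd ℂ] V) (hJ : ∀ x : V, J (J x) = -x)
    (F : Submodule ℂ V) (hF0 : F ≠ ⊥) (hFV : F ≠ ⊤) :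
    (∀ F' : Submodule ℂ V, finrank ℂ F' = finrank ℂ F →
      ¬ (F ⊓ Submodule.map J F < F' ⊓ Submodule.map J F')) ↔
    finrank ℂ F ≤ finrank ℂ (F ⊓ Submodule.map J F : Submodule ℂ V) + 1 :=
  pseudo_quaternionic_iff_codim_le_one_general J hJ F
end
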